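/- For the full shift Σ_r on r symbols with the shift map σ and the uniform system of coefficients c_S^n = 2^{−n}, the topological average sample complexity with respect to the time-zero cover is Asc(Σ_r,𝒰₀,σ) = (log r)/2, and the topological intricacy is Int(Σ_r,𝒰₀,σ) = 0. -/

import Mathlib

open Set Filter Topology

/-- Minimal cardinality of a subcover of a family of sets covering `X`. -/
noncomputable def coverNum {X : Type*} (𝒰 : Set (Set X)) : ℕ :=
  sInf {m | ∃ F : Finset (Set X), ↑F ⊆ 𝒰 ∧ F.card = m ∧ ⋃₀ (F : Set (Set X)) = Set.univ}

/-- The join `⋁_{i ∈ S} T^{-i} 𝒰` of preimages of a cover along a set of times `S ⊆ n*`. -/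
def joinCover {X : Type*} (T : X → X) (𝒰 : Set (Set X)) {n : ℕ} (S : Finset (Fin n)) :
    Set (Set X) :=
  {V | ∃ f : Fin n → Set X, (∀ i, f i ∈ 𝒰) ∧ V = ⋂ i ∈ S, (T^[(i : ℕ)]) ⁻¹' f i}

/-- The shift map on the full shift `Σ_r = {0,…,r-1}^ℤ`. -/
def fullShift (r : ℕ) : (ℤ → Fin r) → (ℤ → Fin r) := fun x i => x (i + 1)

/-- The time-zero cover (and partition) of the full shift by the cylinder sets `{x : x₀ = a}`. -/
def fullTimeZeroCover (r : ℕ) : Set (Set (ℤ → Fin r)) :=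
  Set.range fun a : Fin r => {x : ℤ → Fin r | x 0 = a}

/-!
The join of the time-zero cover along a set of times `S` is the partition of `Σ_r` into the
`r ^ |S|` cylinders over `S`, and a finite partition has no proper subcover, so
`N(𝒰_S) = r ^ |S|`. Hence `log N(𝒰_S) = |S| log r`, whose average over all `S ⊆ n*` is
`(n / 2) log r`, and `N(𝒰_S) N(𝒰_{S^c}) = N(𝒰_{n*})`, so every term of the intricacy vanishes.
-/

section CoverNum

variable {X Y : Type*}

theorem coverNum_eq_ncard_of_isPartition {𝒰 : Set (Set X)} (h𝒰 : Setoid.IsPartition 𝒰)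
    (hfin : 𝒰.Finite) : coverNum 𝒰 = 𝒰.ncard := by
  have hmem : hfin.toFinset.card ∈
      {m | ∃ F : Finset (Set X), ↑F ⊆ 𝒰 ∧ F.card = m ∧ ⋃₀ (F : Set (Set X)) = univ} :=
    ⟨hfin.toFinset, by simp, rfl, by simpa using h𝒰.sUnion_eq_univ⟩
  refine le_antisymm ?_ (le_csInf ⟨_, hmem⟩ ?_)
  · exact (Nat.sInf_le hmem).trans_eq (ncard_eq_toFinset_card 𝒰 hfin).symm
  · rintro _ ⟨F, hF, rfl, hFcov⟩
    -- a subcover must keep every block: a point of a block lies in no other block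
    have h𝒰F : 𝒰 ⊆ F := by
      intro V hV
      obtain ⟨x, hxV⟩ := nonempty_iff_ne_empty.2 (ne_of_mem_of_not_mem hV h𝒰.1)
      obtain ⟨W, hWF, hxW⟩ := mem_sUnion.1 (hFcov ▸ mem_univ x)
      exact (h𝒰.2 x).unique ⟨hF hWF, hxW⟩ ⟨hV, hxV⟩ ▸ hWF
    simpa using ncard_le_ncard h𝒰F F.finite_toSet

theorem isPartition_range_preimage_singleton {π : X → Y} (hπ : Function.Surjective π) :
    Setoid.IsPartition (range fun y => π ⁻¹' {y}) := by
  refine ⟨fun ⟨y, hy⟩ => ?_, fun x => ⟨π ⁻¹' {π x}, ⟨⟨π x, rfl⟩, rfl⟩, ?_⟩⟩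
  · obtain ⟨x, rfl⟩ := hπ y
    exact (hy ▸ mem_singleton (π x) : x ∈ (∅ : Set X))
  · rintro _ ⟨⟨y, rfl⟩, hx⟩
    rw [mem_preimage, mem_singleton_iff] at hx
    rw [hx]

theorem coverNum_range_preimage_singleton [Finite Y] {π : X → Y}
    (hπ : Function.Surjective π) : coverNum (range fun y => π ⁻¹' {y}) = Nat.card Y := by
  rw [coverNum_eq_ncard_of_isPartition (isPartition_range_preimage_singleton hπ) (finite_range _)]
  exact ncard_range_of_injective ((preimage_injective.2 hπ).comp singleton_injective)

end CoverNum

section FullShift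

variable {r n : ℕ}

theorem fullShift_iterate_apply (k : ℕ) (x : ℤ → Fin r) (i : ℤ) :
    (fullShift r)^[k] x i = x (i + k) := by
  induction k generalizing i with
  | zero => simp
  | succ k ih =>
    rw [Function.iterate_succ_apply', fullShift, ih]
    push_cast
    ring_nf

def timeCoords (S : Finset (Fin n)) (x : ℤ → Fin r) : S → Fin r :=
  fun i => x ((i : ℕ) : ℤ)

theorem timeCoords_surjective (hr : 1 ≤ r) (S : Finset (Fin n)) :
    Function.Surjective (timeCoords (r := r) S) := by
  have hemb : Function.Injective fun i : S => ((i : ℕ) : ℤ) :=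
    Nat.cast_injective.comp (Fin.val_injective.comp Subtype.val_injective)
  exact fun b => ⟨Function.extend _ b fun _ => ⟨0, hr⟩, funext fun i => hemb.extend_apply _ _ i⟩

theorem joinCover_fullShift (hr : 1 ≤ r) (S : Finset (Fin n)) :
    joinCover (fullShift r) (fullTimeZeroCover r) S = range fun b => timeCoords S ⁻¹' {b} := by
  ext V
  constructor
  · rintro ⟨f, hf, rfl⟩
    choose a ha using hf
    refine ⟨fun i => a i, ?_⟩
    ext x
    simp [timeCoords, ← ha, fullShift_iterate_apply, funext_iff]
  · rintro ⟨b, rfl⟩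
    refine ⟨fun i => {x | x 0 = if h : i ∈ S then b ⟨i, h⟩ else ⟨0, hr⟩}, fun i => ⟨_, rfl⟩, ?_⟩
    ext x
    simp +contextual [timeCoords, fullShift_iterate_apply, funext_iff]

theorem coverNum_joinCover_fullShift (hr : 1 ≤ r) (S : Finset (Fin n)) :
    coverNum (joinCover (fullShift r) (fullTimeZeroCover r) S) = r ^ S.card := by
  rw [joinCover_fullShift hr, coverNum_range_preimage_singleton (timeCoords_surjective hr S),
    Nat.card_fun]
  simp

end FullShift

theorem sum_card_finset_fin (n : ℕ) : ∑ S : Finset (Fin n), S.card = n * 2 ^ (n - 1) := by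
  have := Finset.sum_powerset_apply_card (fun k => k) (x := (Finset.univ : Finset (Fin n)))
  simpa [mul_comm, Nat.sum_range_mul_choose] using this

theorem average_log_coverNum_joinCover_fullShift {r n : ℕ} (hr : 1 ≤ r) (hn : n ≠ 0) :
    (1 / (n : ℝ)) * ∑ S : Finset (Fin n), (1 / 2 ^ n : ℝ) *
      Real.log (coverNum (joinCover (fullShift r) (fullTimeZeroCover r) S)) = Real.log r / 2 := by
  simp_rw [coverNum_joinCover_fullShift hr, Nat.cast_pow, Real.log_pow, ← Finset.mul_sum,
    ← Finset.sum_mul]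
  obtain ⟨m, rfl⟩ := Nat.exists_eq_add_one_of_ne_zero hn
  rw [← Nat.cast_sum, sum_card_finset_fin]
  push_cast
  field_simp
  ring

theorem coverNum_joinCover_fullShift_mul_compl_div {r n : ℕ} (hr : 1 ≤ r) (S : Finset (Fin n)) :
    (coverNum (joinCover (fullShift r) (fullTimeZeroCover r) S) : ℝ) *
        coverNum (joinCover (fullShift r) (fullTimeZeroCover r) Sᶜ) /
      coverNum (joinCover (fullShift r) (fullTimeZeroCover r) (Finset.univ : Finset (Fin n))) =
      1 := by
  rw [coverNum_joinCover_fullShift hr, coverNum_joinCover_fullShift hr,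
    coverNum_joinCover_fullShift hr, ← Nat.cast_mul, ← pow_add, Finset.card_add_card_compl,
    Finset.card_univ]
  exact div_self (by positivity)

/-- for the full shift on `r` symbols with uniform coefficients `c_S^n = 2^{-n}`,
`Asc(Σ_r,𝒰₀,σ) = (log r)/2` and `Int(Σ_r,𝒰₀,σ) = 0`. -/
theorem asc_and_int_of_full_shift (r : ℕ) (hr : 1 ≤ r) :
    Tendsto (fun n : ℕ =>
        (1 / (n : ℝ)) * ∑ S : Finset (Fin n), (1 / 2 ^ n : ℝ) *
          Real.log (coverNum (joinCover (fullShift r) (fullTimeZeroCover r) S)))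
      atTop (𝓝 (Real.log r / 2)) ∧
    Tendsto (fun n : ℕ =>
        (1 / (n : ℝ)) * ∑ S : Finset (Fin n), (1 / 2 ^ n : ℝ) *
          Real.log (((coverNum (joinCover (fullShift r) (fullTimeZeroCover r) S) : ℝ) *
              (coverNum (joinCover (fullShift r) (fullTimeZeroCover r) Sᶜ) : ℝ)) /
            (coverNum (joinCover (fullShift r) (fullTimeZeroCover r)
              (Finset.univ : Finset (Fin n))) : ℝ)))
      atTop (𝓝 0) := by
  refine ⟨tendsto_const_nhds.congr' ?_, ?_⟩
  · filter_upwards [eventually_ne_atTop 0] with n hn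
    exact (average_log_coverNum_joinCover_fullShift hr hn).symm
  · simp only [coverNum_joinCover_fullShift_mul_compl_div hr, Real.log_one, mul_zero,
      Finset.sum_const_zero]
    exact tendsto_const_nhds
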